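/- arXiv:1408.1428 — 2 statements merged into one kernel-verified Lean document; each statement's English description precedes it below -/
import Mathlib

section
/- Let Π = {t_0 < ... < t_{2^m}} and Π' = {s_0 < ... < s_{2^{m'}}} be partitions of [a,b] and [c,d], and let F : [a,b] × [c,d] → ℝ with ‖F‖_{2;q} < ∞ for some q ≥ 1. Then Σ_{i=1}^{2^m} Σ_{j=1}^{2^{m'}} |Δ_iΔ_j F(t_i,s_j)| ≤ 4 · 2^{m+m'} · ‖F‖_{2;q} / 2^{m'/q}. -/
/-! For fixed `i`, the increments `Δ_iΔ_j F` are the increments in `y` of the single function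
`y ↦ F(t_i, y) - F(t_{i-1}, y)`, whose `q`-variation is at most `‖F‖_{2;q}`. The power-mean
inequality bounds the sum of the `2^{m'}` absolute increments by `2^{m'(1 - 1/q)}` times their
`ℓ^q` norm, and summing over the `2^m` rows gives `2^{m+m'} ‖F‖_{2;q} / 2^{m'/q}`. -/

open Set

noncomputable section

/-- Rectangular increment of a two-variable function. -/
def rect (H : ℝ → ℝ → ℝ) (x x' y y' : ℝ) : ℝ :=
  H x' y' - H x y' - H x' y + H x y

/-- `t` is a (monotone) partition of `[a,b]`. -/
def IsPartition {n : ℕ} (a b : ℝ) (t : Fin (n + 1) → ℝ) : Prop :=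
  Monotone t ∧ t 0 = a ∧ t (Fin.last n) = b

/-- The set of `p`-variation sums of `f` over partitions of `[a,b]`. -/
def pVarSet (p a b : ℝ) (f : ℝ → ℝ) : Set ℝ :=
  {v | ∃ (n : ℕ) (t : Fin (n + 1) → ℝ), IsPartition a b t ∧
        v = ∑ i : Fin n, |f (t i.succ) - f (t i.castSucc)| ^ p}

/-- The `p`-variation seminorm `‖f‖_{[a,b],p}`. -/
def pVarNorm (p a b : ℝ) (f : ℝ → ℝ) : ℝ :=
  sSup (pVarSet p a b f) ^ (1 / p)

def biVar1Set (p a b c d : ℝ) (F : ℝ → ℝ → ℝ) : Set ℝ :=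
  {v | ∃ y₁ ∈ Icc c d, ∃ y₂ ∈ Icc c d, v = pVarNorm p a b (fun x => F x y₁ - F x y₂)}

/-- The first bivariation seminorm `‖F‖_{1;p}`. -/
def biVar1 (p a b c d : ℝ) (F : ℝ → ℝ → ℝ) : ℝ := sSup (biVar1Set p a b c d F)

def biVar2Set (q a b c d : ℝ) (F : ℝ → ℝ → ℝ) : Set ℝ :=
  {v | ∃ x₁ ∈ Icc a b, ∃ x₂ ∈ Icc a b, v = pVarNorm q c d (fun y => F x₁ y - F x₂ y)}

/-- The second bivariation seminorm `‖F‖_{2;q}`. -/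
def biVar2 (q a b c d : ℝ) (F : ℝ → ℝ → ℝ) : ℝ := sSup (biVar2Set q a b c d F)

/-- `‖F‖_{1;p} < ∞`: all the suprema involved are finite. -/
def FiniteBiVar1 (p a b c d : ℝ) (F : ℝ → ℝ → ℝ) : Prop :=
  (∀ y₁ ∈ Icc c d, ∀ y₂ ∈ Icc c d,
      BddAbove (pVarSet p a b (fun x => F x y₁ - F x y₂))) ∧
  BddAbove (biVar1Set p a b c d F)

/-- `‖F‖_{2;q} < ∞`: all the suprema involved are finite. -/
def FiniteBiVar2 (q a b c d : ℝ) (F : ℝ → ℝ → ℝ) : Prop :=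
  (∀ x₁ ∈ Icc a b, ∀ x₂ ∈ Icc a b,
      BddAbove (pVarSet q c d (fun y => F x₁ y - F x₂ y))) ∧
  BddAbove (biVar2Set q a b c d F)

open Finset

theorem sum_abs_le_card_rpow_mul_rpow_sum {ι : Type*} (s : Finset ι) (f : ι → ℝ) {q : ℝ}
    (hq : 1 ≤ q) :
    ∑ i ∈ s, |f i| ≤ (#s : ℝ) ^ (1 - 1 / q) * (∑ i ∈ s, |f i| ^ q) ^ (1 / q) := by
  have hq0 : 0 < q := by linarith
  have hpow := Real.rpow_le_rpow (by positivity) (Real.rpow_sum_le_const_mul_sum_rpow s f hq)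
    (one_div_nonneg.mpr hq0.le)
  rwa [one_div, Real.rpow_rpow_inv (by positivity) hq0.ne', Real.mul_rpow (by positivity)
    (by positivity), ← Real.rpow_mul (by positivity), ← one_div,
    show (q - 1) * (1 / q) = 1 - 1 / q by field_simp] at hpow

theorem IsPartition.mem_Icc {n : ℕ} {a b : ℝ} {t : Fin (n + 1) → ℝ} (ht : IsPartition a b t)
    (i : Fin (n + 1)) : t i ∈ Icc a b :=
  ⟨ht.2.1 ▸ ht.1 (Fin.zero_le i), ht.2.2 ▸ ht.1 (Fin.le_last i)⟩

theorem rpow_sum_le_pVarNorm {p c d : ℝ} (hp : 0 ≤ p) {f : ℝ → ℝ}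
    (hf : BddAbove (pVarSet p c d f)) {n : ℕ} {s : Fin (n + 1) → ℝ} (hs : IsPartition c d s) :
    (∑ j : Fin n, |f (s j.succ) - f (s j.castSucc)| ^ p) ^ (1 / p) ≤ pVarNorm p c d f :=
  Real.rpow_le_rpow (sum_nonneg fun _ _ => by positivity) (le_csSup hf ⟨n, s, hs, rfl⟩)
    (by positivity)

section BiVar2

variable {q a b c d : ℝ} {F : ℝ → ℝ → ℝ} {x x' : ℝ}

theorem rpow_sum_abs_rect_le_biVar2 (hq : 0 ≤ q) (hF : FiniteBiVar2 q a b c d F)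
    (hx : x ∈ Icc a b) (hx' : x' ∈ Icc a b) {n : ℕ} {s : Fin (n + 1) → ℝ}
    (hs : IsPartition c d s) :
    (∑ j : Fin n, |rect F x x' (s j.castSucc) (s j.succ)| ^ q) ^ (1 / q)
      ≤ biVar2 q a b c d F := by
  have hrect (y y' : ℝ) : rect F x x' y y' = (F x' y' - F x y') - (F x' y - F x y) := by
    rw [rect]; ring
  simp only [hrect]
  exact (rpow_sum_le_pVarNorm hq (hF.1 x' hx' x hx) hs).trans
    (le_csSup hF.2 ⟨x', hx', x, hx, rfl⟩)

theorem biVar2_nonneg (hq : 0 ≤ q) (hF : FiniteBiVar2 q a b c d F) (hx : x ∈ Icc a b)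
    {n : ℕ} {s : Fin (n + 1) → ℝ} (hs : IsPartition c d s) : 0 ≤ biVar2 q a b c d F :=
  (by positivity : (0 : ℝ) ≤ _).trans (rpow_sum_abs_rect_le_biVar2 hq hF hx hx hs)

theorem sum_abs_rect_le_card_rpow_mul_biVar2 (hq : 1 ≤ q) (hF : FiniteBiVar2 q a b c d F)
    (hx : x ∈ Icc a b) (hx' : x' ∈ Icc a b) {n : ℕ} {s : Fin (n + 1) → ℝ}
    (hs : IsPartition c d s) :
    ∑ j : Fin n, |rect F x x' (s j.castSucc) (s j.succ)|
      ≤ (n : ℝ) ^ (1 - 1 / q) * biVar2 q a b c d F := by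
  calc ∑ j : Fin n, |rect F x x' (s j.castSucc) (s j.succ)|
      ≤ (n : ℝ) ^ (1 - 1 / q) *
          (∑ j : Fin n, |rect F x x' (s j.castSucc) (s j.succ)| ^ q) ^ (1 / q) := by
        simpa using sum_abs_le_card_rpow_mul_rpow_sum univ
          (fun j : Fin n => rect F x x' (s j.castSucc) (s j.succ)) hq
    _ ≤ (n : ℝ) ^ (1 - 1 / q) * biVar2 q a b c d F := by
        gcongr
        exact rpow_sum_abs_rect_le_biVar2 (by linarith) hF hx hx' hs

end BiVar2

/-- bound for the sum of absolute rectangular increments of `F`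
over a `2^m × 2^{m'}` grid in terms of `‖F‖_{2;q}`. -/
theorem sum_abs_rect_le_biVar2
    (a b c d q : ℝ) (hq : 1 ≤ q)
    (F : ℝ → ℝ → ℝ) (hF2 : FiniteBiVar2 q a b c d F)
    (m m' : ℕ) (t : Fin (2 ^ m + 1) → ℝ) (s : Fin (2 ^ m' + 1) → ℝ)
    (ht : IsPartition a b t) (hs : IsPartition c d s) :
    ∑ i : Fin (2 ^ m), ∑ j : Fin (2 ^ m'),
        |rect F (t i.castSucc) (t i.succ) (s j.castSucc) (s j.succ)|
      ≤ 4 * 2 ^ (m + m') * biVar2 q a b c d F / (2 : ℝ) ^ ((m' : ℝ) / q) := by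
  have hB := biVar2_nonneg (by linarith) hF2 (ht.mem_Icc 0) hs
  have hcoef : ((2 ^ m' : ℕ) : ℝ) ^ (1 - 1 / q) = 2 ^ m' / (2 : ℝ) ^ ((m' : ℝ) / q) := by
    rw [Real.rpow_sub (by positivity), Real.rpow_one, Nat.cast_pow, Nat.cast_ofNat,
      ← Real.rpow_natCast, ← Real.rpow_mul (by norm_num), mul_one_div]
  calc ∑ i : Fin (2 ^ m), ∑ j : Fin (2 ^ m'),
        |rect F (t i.castSucc) (t i.succ) (s j.castSucc) (s j.succ)|
      ≤ ∑ _i : Fin (2 ^ m), ((2 ^ m' : ℕ) : ℝ) ^ (1 - 1 / q) * biVar2 q a b c d F :=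
        sum_le_sum fun i _ =>
          sum_abs_rect_le_card_rpow_mul_biVar2 hq hF2 (ht.mem_Icc _) (ht.mem_Icc _) hs
    _ = 2 ^ (m + m') * biVar2 q a b c d F / (2 : ℝ) ^ ((m' : ℝ) / q) := by
        rw [sum_const, card_univ, Fintype.card_fin, nsmul_eq_mul, hcoef, pow_add]
        push_cast
        ring
    _ ≤ 4 * 2 ^ (m + m') * biVar2 q a b c d F / (2 : ℝ) ^ ((m' : ℝ) / q) := by
        gcongr
        linarith [pow_pos (two_pos : (0 : ℝ) < 2) (m + m')]
end
end

section
/- Let F, G : [a,b] × [c,d] → ℝ, and let {t_i^{(k)}} and {s_j^{(k')}} be nested dyadic-refining sequences of partitions of [a,b] and [c,d] with mesh bounds |t_{i}^{(k)} − t_{i-1}^{(k)}| < 4·2^{-k} and |s_j^{(k')} − s_{j-1}^{(k')}| < 4·2^{-k'}. Suppose λ, μ, ρ, σ are non-decreasing functions with ρ(u)σ(u) = u, F has finite (p,q)-bivariation, and |Δ_iΔ_j G(x_i, y_j)| ≤ λ(x_i − x_{i-1}) μ(y_j − y_{j-1}) for every pair of adjacent points in any partition. Define S_{n,n'} = Σ_{i=1}^{2^n}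 Σ_{j=1}^{2^{n'}} F(t_i^{(n)}, s_j^{(n')}) Δ_iΔ_j G(t_i^{(n)}, s_j^{(n')}). Then |S_{M,M'} − S_{0,M'} − S_{M,0} + S_{0,0}| ≤ 16 (Σ_{m=1}^∞ ρ(‖F‖_{1;p}/m^{1/p}) λ(4/m)) (Σ_{m'=1}^∞ σ(‖F‖_{2;q}/m'^{1/q}) μ(4/m')). -/
open Set

noncomputable section

/-!
Telescoping in both levels writes `S_{M,M'} - S_{0,M'} - S_{M,0} + S_{0,0}` as the sum over
`k < M`, `k' < M'` of the double differences of consecutive dyadic levels. After one refinement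
of both partitions such a double difference is a sum, over the `2^k × 2^{k'}` coarse cells, of
`Δ²F` on one quarter times `Δ²G` on the opposite quarter. The `G`-factors are at most
`λ(4/2^{k+1}) μ(4/2^{k'+1})`. By Hölder along rows and along columns, the `F`-factors add up to at
most `N N' min (‖F‖_{1;p} / N^{1/p}) (‖F‖_{2;q} / N'^{1/q})`, and `min A B ≤ ρ A σ B` because
`ρσ = id`. Summing over the levels, Cauchy condensation bounds each dyadic series by twice the
corresponding Young series.
-/

open Finset

lemma sum_range_two_mul {M : Type*} [AddCommMonoid M] (n : ℕ) (v : ℕ → M) :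
    ∑ i ∈ range (2 * n), v i = ∑ i ∈ range n, (v (2 * i) + v (2 * i + 1)) := by
  induction n with
  | zero => simp
  | succ n ih =>
    rw [mul_add, mul_one, sum_range_succ, sum_range_succ, sum_range_succ, ih, add_assoc]

lemma sum_range_sum_range_rect {M : Type*} [AddCommGroup M] (S : ℕ → ℕ → M) (m n : ℕ) :
    ∑ k ∈ range m, ∑ l ∈ range n, (S (k + 1) (l + 1) - S k (l + 1) - S (k + 1) l + S k l) =
      S m n - S 0 n - S m 0 + S 0 0 := by
  have inner (k : ℕ) : ∑ l ∈ range n, (S (k + 1) (l + 1) - S k (l + 1) - S (k + 1) l + S k l) =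
      (S (k + 1) n - S (k + 1) 0) - (S k n - S k 0) := by
    rw [← sub_sub_sub_comm, ← sum_range_sub (fun l => S (k + 1) l - S k l)]
    exact sum_congr rfl fun l _ => by abel
  rw [sum_congr rfl fun k _ => inner k, sum_range_sub (fun k => S k n - S k 0)]
  abel

lemma mem_Icc_of_monotoneOn {x : ℕ → ℝ} {n : ℕ} {a b : ℝ} (hx : MonotoneOn x (Set.Iic n))
    (hx0 : x 0 = a) (hxn : x n = b) {i : ℕ} (hi : i ≤ n) : x i ∈ Icc a b :=
  ⟨hx0 ▸ hx (Set.mem_Iic.2 (Nat.zero_le n)) (Set.mem_Iic.2 hi) (Nat.zero_le i),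
    hxn ▸ hx (Set.mem_Iic.2 hi) (Set.mem_Iic.2 le_rfl) hi⟩

lemma pVarNorm_nonneg (p a b : ℝ) (g : ℝ → ℝ) : 0 ≤ pVarNorm p a b g :=
  Real.rpow_nonneg (Real.sSup_nonneg <| by rintro _ ⟨_, _, _, rfl⟩; positivity) _

lemma biVar1_nonneg (p a b c d : ℝ) (F : ℝ → ℝ → ℝ) : 0 ≤ biVar1 p a b c d F :=
  Real.sSup_nonneg <| by rintro _ ⟨_, _, _, _, rfl⟩; exact pVarNorm_nonneg _ _ _ _

lemma biVar2_nonneg_s9 (q a b c d : ℝ) (F : ℝ → ℝ → ℝ) : 0 ≤ biVar2 q a b c d F :=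
  Real.sSup_nonneg <| by rintro _ ⟨_, _, _, _, rfl⟩; exact pVarNorm_nonneg _ _ _ _

lemma sum_range_rpow_le_pVarNorm_rpow {p a b : ℝ} (hp : 0 < p) {g : ℝ → ℝ}
    (hg : BddAbove (pVarSet p a b g)) {x : ℕ → ℝ} {n : ℕ} (hx : MonotoneOn x (Set.Iic n))
    (hx0 : x 0 = a) (hxn : x n = b) :
    ∑ r ∈ range n, |g (x (r + 1)) - g (x r)| ^ p ≤ pVarNorm p a b g ^ p := by
  have hmem : ∑ r ∈ range n, |g (x (r + 1)) - g (x r)| ^ p ∈ pVarSet p a b g := by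
    refine ⟨n, fun r => x r, ⟨fun r r' h => hx (Set.mem_Iic.2 (Nat.lt_succ_iff.1 r.2))
      (Set.mem_Iic.2 (Nat.lt_succ_iff.1 r'.2)) h, hx0, hxn⟩, ?_⟩
    simp [← Fin.sum_univ_eq_sum_range]
  rw [pVarNorm, ← Real.rpow_mul (Real.sSup_nonneg <| by rintro _ ⟨_, _, _, rfl⟩; positivity),
    one_div_mul_cancel hp.ne', Real.rpow_one]
  exact le_csSup hg hmem

lemma sum_le_card_mul_div_rpow {ι : Type*} {p : ℝ} (hp : 1 ≤ p) {s : Finset ι} {f : ι → ℝ}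
    (hf : ∀ i ∈ s, 0 ≤ f i) {V : ℝ} (hV : 0 ≤ V) (h : ∑ i ∈ s, f i ^ p ≤ V ^ p) :
    ∑ i ∈ s, f i ≤ #s * (V / (#s : ℝ) ^ (1 / p)) := by
  rcases s.eq_empty_or_nonempty with rfl | hs
  · simp
  have hN : (0 : ℝ) < #s := by exact_mod_cast hs.card_pos
  have hpow : (#s * (V / (#s : ℝ) ^ (1 / p))) ^ p = (#s : ℝ) ^ (p - 1) * V ^ p := by
    rw [Real.mul_rpow hN.le (by positivity), Real.div_rpow hV (by positivity),
      ← Real.rpow_mul hN.le, one_div_mul_cancel (by linarith), Real.rpow_one,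
      Real.rpow_sub_one hN.ne']
    ring
  refine (Real.rpow_le_rpow_iff (sum_nonneg hf) (by positivity) (by linarith : (0 : ℝ) < p)).1 ?_
  calc (∑ i ∈ s, f i) ^ p ≤ (#s : ℝ) ^ (p - 1) * ∑ i ∈ s, f i ^ p :=
        Real.rpow_sum_le_const_mul_sum_rpow_of_nonneg s hp hf
    _ ≤ (#s : ℝ) ^ (p - 1) * V ^ p := by gcongr
    _ = _ := hpow.symm

lemma min_le_mul_of_mul_eq_id {ρ σ : ℝ → ℝ} (hρ : MonotoneOn ρ (Ici 0))
    (hσ : MonotoneOn σ (Ici 0)) (hρ0 : ∀ u ≥ (0 : ℝ), 0 ≤ ρ u) (hσ0 : ∀ u ≥ (0 : ℝ), 0 ≤ σ u)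
    (hρσ : ∀ u ≥ (0 : ℝ), ρ u * σ u = u) {A B : ℝ} (hA : 0 ≤ A) (hB : 0 ≤ B) :
    min A B ≤ ρ A * σ B := by
  rcases le_total A B with h | h
  · calc min A B ≤ A := min_le_left _ _
      _ = ρ A * σ A := (hρσ A hA).symm
      _ ≤ ρ A * σ B := mul_le_mul_of_nonneg_left (hσ hA (hA.trans h) h) (hρ0 A hA)
  · calc min A B ≤ B := min_le_right _ _
      _ = ρ B * σ B := (hρσ B hB).symm
      _ ≤ ρ A * σ B := mul_le_mul_of_nonneg_right (hρ hB (hB.trans h) h) (hσ0 B hB)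

lemma sum_range_two_pow_mul_le_two_mul_tsum {f : ℕ → ℝ} (hf : Antitone f) (hf0 : 0 ≤ f)
    (hs : Summable f) (M : ℕ) : ∑ k ∈ range M, 2 ^ k * f (2 ^ k - 1) ≤ 2 * ∑' m, f m := by
  have hblock (k : ℕ) : 2 ^ k * f (2 ^ (k + 1) - 1) ≤ ∑ m ∈ Ico (2 ^ k) (2 ^ (k + 1)), f m := by
    have hcard : #(Ico (2 ^ k) (2 ^ (k + 1))) = 2 ^ k := by rw [Nat.card_Ico, pow_succ]; omega
    have h := card_nsmul_le_sum (Ico (2 ^ k) (2 ^ (k + 1))) f _ fun m hm =>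
      hf (show m ≤ 2 ^ (k + 1) - 1 by rw [Finset.mem_Ico] at hm; omega)
    rwa [hcard, nsmul_eq_mul, Nat.cast_pow, Nat.cast_ofNat] at h
  have hpartial (M : ℕ) :
      ∑ k ∈ range M, 2 ^ k * f (2 ^ k - 1) + 2 ^ M * f (2 ^ M - 1) ≤
        2 * ∑ m ∈ range (2 ^ M), f m := by
    induction M with
    | zero => simpa [two_mul] using hf0 0
    | succ M ih =>
      rw [sum_range_succ, ← sum_range_add_sum_Ico f (Nat.pow_le_pow_right two_pos M.le_succ),
        pow_succ' (2 : ℝ)]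
      linarith [hblock M]
  calc ∑ k ∈ range M, 2 ^ k * f (2 ^ k - 1)
      ≤ 2 * ∑ m ∈ range (2 ^ M), f m :=
        le_of_add_le_of_nonneg_left (hpartial M) (mul_nonneg (by positivity) (hf0 _))
    _ ≤ 2 * ∑' m, f m := by gcongr; exact hs.sum_le_tsum _ fun m _ => hf0 m

/-- The paper's double sum `S_{n,n'}` over the partitions `x 0 ≤ … ≤ x N`, `y 0 ≤ … ≤ y N'`. -/
def stieltjesSum (F G : ℝ → ℝ → ℝ) (x y : ℕ → ℝ) (N N' : ℕ) : ℝ :=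
  ∑ i ∈ range N, ∑ j ∈ range N',
    F (x (i + 1)) (y (j + 1)) * rect G (x i) (x (i + 1)) (y j) (y (j + 1))

lemma stieltjesSum_congr (F G : ℝ → ℝ → ℝ) {x x' y y' : ℕ → ℝ} {N N' : ℕ}
    (hx : ∀ i ≤ N, x i = x' i) (hy : ∀ j ≤ N', y j = y' j) :
    stieltjesSum F G x y N N' = stieltjesSum F G x' y' N N' :=
  sum_congr rfl fun i hi => sum_congr rfl fun j hj => by
    rw [Finset.mem_range] at hi hj
    rw [hx i hi.le, hx (i + 1) hi, hy j hj.le, hy (j + 1) hj]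

/-- Refining both partitions once, only the lower-left quarter of each coarse cell keeps its
`G`-increment, now weighted by the rectangular increment of `F` over the upper-right quarter. -/
lemma stieltjesSum_refine (F G : ℝ → ℝ → ℝ) (x y : ℕ → ℝ) (N N' : ℕ) :
    stieltjesSum F G x y (2 * N) (2 * N') - stieltjesSum F G (fun i => x (2 * i)) y N (2 * N')
      - stieltjesSum F G x (fun j => y (2 * j)) (2 * N) N'
      + stieltjesSum F G (fun i => x (2 * i)) (fun j => y (2 * j)) N N' =
    ∑ i ∈ range N, ∑ j ∈ range N',
      rect F (x (2 * i + 1)) (x (2 * i + 2)) (y (2 * j + 1)) (y (2 * j + 2)) *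
        rect G (x (2 * i)) (x (2 * i + 1)) (y (2 * j)) (y (2 * j + 1)) := by
  simp only [stieltjesSum, sum_range_two_mul, ← sum_add_distrib, ← sum_sub_distrib]
  refine sum_congr rfl fun i _ => sum_congr rfl fun j _ => ?_
  simp only [rect, mul_add, mul_one, add_assoc, Nat.reduceAdd]
  ring

section LevelBound

variable {a b c d p q : ℝ} {F G : ℝ → ℝ → ℝ} {x y : ℕ → ℝ} {N N' : ℕ}

lemma sum_abs_rect_le_of_finiteBiVar1 (hp : 1 ≤ p) (hF : FiniteBiVar1 p a b c d F)
    (hx : MonotoneOn x (Set.Iic (2 * N))) (hx0 : x 0 = a) (hxN : x (2 * N) = b)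
    {y₁ y₂ : ℝ} (hy₁ : y₁ ∈ Icc c d) (hy₂ : y₂ ∈ Icc c d) :
    ∑ i ∈ range N, |rect F (x (2 * i + 1)) (x (2 * i + 2)) y₁ y₂| ≤
      N * (biVar1 p a b c d F / (N : ℝ) ^ (1 / p)) := by
  set g : ℝ → ℝ := fun u => F u y₂ - F u y₁
  have hvar : ∑ i ∈ range N, |rect F (x (2 * i + 1)) (x (2 * i + 2)) y₁ y₂| ^ p ≤
      biVar1 p a b c d F ^ p := calc
    _ ≤ ∑ r ∈ range (2 * N), |g (x (r + 1)) - g (x r)| ^ p := by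
      rw [sum_range_two_mul]
      refine sum_le_sum fun i _ => le_add_of_nonneg_of_le (by positivity) (le_of_eq ?_)
      simp only [rect, g]
      ring_nf
    _ ≤ pVarNorm p a b g ^ p :=
      sum_range_rpow_le_pVarNorm_rpow (by linarith) (hF.1 y₂ hy₂ y₁ hy₁) hx hx0 hxN
    _ ≤ biVar1 p a b c d F ^ p := by
      gcongr
      · exact pVarNorm_nonneg _ _ _ _
      · exact le_csSup hF.2 ⟨y₂, hy₂, y₁, hy₁, rfl⟩
  simpa using sum_le_card_mul_div_rpow hp (fun i _ => abs_nonneg _) (biVar1_nonneg _ _ _ _ _ _) hvar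

lemma sum_abs_rect_le_of_finiteBiVar2 (hq : 1 ≤ q) (hF : FiniteBiVar2 q a b c d F)
    (hy : MonotoneOn y (Set.Iic (2 * N'))) (hy0 : y 0 = c) (hyN : y (2 * N') = d)
    {x₁ x₂ : ℝ} (hx₁ : x₁ ∈ Icc a b) (hx₂ : x₂ ∈ Icc a b) :
    ∑ j ∈ range N', |rect F x₁ x₂ (y (2 * j + 1)) (y (2 * j + 2))| ≤
      N' * (biVar2 q a b c d F / (N' : ℝ) ^ (1 / q)) := by
  set h : ℝ → ℝ := fun v => F x₂ v - F x₁ v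
  have hvar : ∑ j ∈ range N', |rect F x₁ x₂ (y (2 * j + 1)) (y (2 * j + 2))| ^ q ≤
      biVar2 q a b c d F ^ q := calc
    _ ≤ ∑ r ∈ range (2 * N'), |h (y (r + 1)) - h (y r)| ^ q := by
      rw [sum_range_two_mul]
      refine sum_le_sum fun j _ => le_add_of_nonneg_of_le (by positivity) (le_of_eq ?_)
      simp only [rect, h]
      ring_nf
    _ ≤ pVarNorm q c d h ^ q :=
      sum_range_rpow_le_pVarNorm_rpow (by linarith) (hF.1 x₂ hx₂ x₁ hx₁) hy hy0 hyN
    _ ≤ biVar2 q a b c d F ^ q := by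
      gcongr
      · exact pVarNorm_nonneg _ _ _ _
      · exact le_csSup hF.2 ⟨x₂, hx₂, x₁, hx₁, rfl⟩
  simpa using sum_le_card_mul_div_rpow hq (fun j _ => abs_nonneg _) (biVar2_nonneg_s9 _ _ _ _ _ _) hvar

lemma sum_sum_abs_rect_le_min (hp : 1 ≤ p) (hq : 1 ≤ q)
    (hF₁ : FiniteBiVar1 p a b c d F) (hF₂ : FiniteBiVar2 q a b c d F)
    (hx : MonotoneOn x (Set.Iic (2 * N))) (hx0 : x 0 = a) (hxN : x (2 * N) = b)
    (hy : MonotoneOn y (Set.Iic (2 * N'))) (hy0 : y 0 = c) (hyN : y (2 * N') = d) :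
    ∑ i ∈ range N, ∑ j ∈ range N',
        |rect F (x (2 * i + 1)) (x (2 * i + 2)) (y (2 * j + 1)) (y (2 * j + 2))| ≤
      N * N' * min (biVar1 p a b c d F / (N : ℝ) ^ (1 / p))
        (biVar2 q a b c d F / (N' : ℝ) ^ (1 / q)) := by
  rw [mul_min_of_nonneg _ _ (by positivity)]
  refine le_min ?_ ?_
  · rw [sum_comm]
    refine (sum_le_card_nsmul _ _ (N * (biVar1 p a b c d F / (N : ℝ) ^ (1 / p)))
      fun j hj => ?_).trans_eq (by rw [card_range, nsmul_eq_mul]; ring)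
    rw [Finset.mem_range] at hj
    exact sum_abs_rect_le_of_finiteBiVar1 hp hF₁ hx hx0 hxN
      (mem_Icc_of_monotoneOn hy hy0 hyN (by omega)) (mem_Icc_of_monotoneOn hy hy0 hyN (by omega))
  · refine (sum_le_card_nsmul _ _ (N' * (biVar2 q a b c d F / (N' : ℝ) ^ (1 / q)))
      fun i hi => ?_).trans_eq (by rw [card_range, nsmul_eq_mul]; ring)
    rw [Finset.mem_range] at hi
    exact sum_abs_rect_le_of_finiteBiVar2 hq hF₂ hy hy0 hyN
      (mem_Icc_of_monotoneOn hx hx0 hxN (by omega)) (mem_Icc_of_monotoneOn hx hx0 hxN (by omega))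

lemma abs_rect_le_of_mesh {lam mu : ℝ → ℝ} {n n' : ℕ}
    (hlam : MonotoneOn lam (Ici 0)) (hmu : MonotoneOn mu (Ici 0))
    (hlam0 : ∀ u ≥ (0 : ℝ), 0 ≤ lam u) (hmu0 : ∀ u ≥ (0 : ℝ), 0 ≤ mu u)
    (hG : ∀ x₁ x₂ y₁ y₂ : ℝ, a ≤ x₁ → x₁ ≤ x₂ → x₂ ≤ b → c ≤ y₁ → y₁ ≤ y₂ → y₂ ≤ d →
      |rect G x₁ x₂ y₁ y₂| ≤ lam (x₂ - x₁) * mu (y₂ - y₁))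
    (hx : MonotoneOn x (Set.Iic n)) (hx0 : x 0 = a) (hxn : x n = b)
    (hy : MonotoneOn y (Set.Iic n')) (hy0 : y 0 = c) (hyn : y n' = d)
    {δ ε : ℝ} (hδ : 0 ≤ δ) (hε : 0 ≤ ε)
    (hxδ : ∀ i < n, x (i + 1) - x i ≤ δ) (hyε : ∀ j < n', y (j + 1) - y j ≤ ε)
    {i j : ℕ} (hi : i < n) (hj : j < n') :
    |rect G (x i) (x (i + 1)) (y j) (y (j + 1))| ≤ lam δ * mu ε := by
  have hxi : x i ≤ x (i + 1) := hx (Set.mem_Iic.2 hi.le) (Set.mem_Iic.2 hi) i.le_succ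
  have hyj : y j ≤ y (j + 1) := hy (Set.mem_Iic.2 hj.le) (Set.mem_Iic.2 hj) j.le_succ
  refine (hG _ _ _ _ (mem_Icc_of_monotoneOn hx hx0 hxn hi.le).1 hxi
    (mem_Icc_of_monotoneOn hx hx0 hxn hi).2 (mem_Icc_of_monotoneOn hy hy0 hyn hj.le).1 hyj
    (mem_Icc_of_monotoneOn hy hy0 hyn hj).2).trans
    (mul_le_mul ?_ ?_ (hmu0 _ (sub_nonneg.2 hyj)) (hlam0 δ hδ))
  · exact hlam (sub_nonneg.2 hxi) hδ (hxδ i hi)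
  · exact hmu (sub_nonneg.2 hyj) hε (hyε j hj)

lemma abs_sum_rect_mul_rect_le {lam mu ρ σ : ℝ → ℝ} (hp : 1 ≤ p) (hq : 1 ≤ q)
    (hF₁ : FiniteBiVar1 p a b c d F) (hF₂ : FiniteBiVar2 q a b c d F)
    (hlam : MonotoneOn lam (Ici 0)) (hmu : MonotoneOn mu (Ici 0))
    (hlam0 : ∀ u ≥ (0 : ℝ), 0 ≤ lam u) (hmu0 : ∀ u ≥ (0 : ℝ), 0 ≤ mu u)
    (hρ : MonotoneOn ρ (Ici 0)) (hσ : MonotoneOn σ (Ici 0))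
    (hρ0 : ∀ u ≥ (0 : ℝ), 0 ≤ ρ u) (hσ0 : ∀ u ≥ (0 : ℝ), 0 ≤ σ u)
    (hρσ : ∀ u ≥ (0 : ℝ), ρ u * σ u = u)
    (hG : ∀ x₁ x₂ y₁ y₂ : ℝ, a ≤ x₁ → x₁ ≤ x₂ → x₂ ≤ b → c ≤ y₁ → y₁ ≤ y₂ → y₂ ≤ d →
      |rect G x₁ x₂ y₁ y₂| ≤ lam (x₂ - x₁) * mu (y₂ - y₁))
    (hx : MonotoneOn x (Set.Iic (2 * N))) (hx0 : x 0 = a) (hxN : x (2 * N) = b)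
    (hy : MonotoneOn y (Set.Iic (2 * N'))) (hy0 : y 0 = c) (hyN : y (2 * N') = d)
    {δ ε : ℝ} (hδ : 0 ≤ δ) (hε : 0 ≤ ε)
    (hxδ : ∀ i < 2 * N, x (i + 1) - x i ≤ δ) (hyε : ∀ j < 2 * N', y (j + 1) - y j ≤ ε) :
    |∑ i ∈ range N, ∑ j ∈ range N',
        rect F (x (2 * i + 1)) (x (2 * i + 2)) (y (2 * j + 1)) (y (2 * j + 2)) *
          rect G (x (2 * i)) (x (2 * i + 1)) (y (2 * j)) (y (2 * j + 1))| ≤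
      (N * ρ (biVar1 p a b c d F / (N : ℝ) ^ (1 / p)) * lam δ) *
        (N' * σ (biVar2 q a b c d F / (N' : ℝ) ^ (1 / q)) * mu ε) := by
  set A := biVar1 p a b c d F / (N : ℝ) ^ (1 / p)
  set B := biVar2 q a b c d F / (N' : ℝ) ^ (1 / q)
  have hK : 0 ≤ lam δ * mu ε := mul_nonneg (hlam0 δ hδ) (hmu0 ε hε)
  calc _ ≤ ∑ i ∈ range N, ∑ j ∈ range N',
        |rect F (x (2 * i + 1)) (x (2 * i + 2)) (y (2 * j + 1)) (y (2 * j + 2))| *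
          (lam δ * mu ε) := by
        refine (abs_sum_le_sum_abs _ _).trans (sum_le_sum fun i hi => ?_)
        refine (abs_sum_le_sum_abs _ _).trans (sum_le_sum fun j hj => ?_)
        rw [abs_mul]
        rw [Finset.mem_range] at hi hj
        exact mul_le_mul_of_nonneg_left (abs_rect_le_of_mesh hlam hmu hlam0 hmu0 hG hx hx0 hxN
          hy hy0 hyN hδ hε hxδ hyε (by omega) (by omega)) (abs_nonneg _)
    _ ≤ (N * N' * min A B) * (lam δ * mu ε) := by
        simp only [← sum_mul]
        exact mul_le_mul_of_nonneg_right
          (sum_sum_abs_rect_le_min hp hq hF₁ hF₂ hx hx0 hxN hy hy0 hyN) hK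
    _ ≤ (N * N' * (ρ A * σ B)) * (lam δ * mu ε) := by
        refine mul_le_mul_of_nonneg_right (mul_le_mul_of_nonneg_left ?_ (by positivity)) hK
        exact min_le_mul_of_mul_eq_id hρ hσ hρ0 hσ0 hρσ
          (div_nonneg (biVar1_nonneg _ _ _ _ _ _) (by positivity))
          (div_nonneg (biVar2_nonneg_s9 _ _ _ _ _ _) (by positivity))
    _ = _ := by ring

end LevelBound

/-- The level-`k` bound `N ρ(V / N^{1/p}) λ(δ)` for `N = 2^k` and mesh `δ = 4 / 2^{k+1}`. -/
def dyadicYoungTerm (ρ lam : ℝ → ℝ) (V p : ℝ) (k : ℕ) : ℝ :=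
  2 ^ k * ρ (V / ((2 : ℝ) ^ k) ^ (1 / p)) * lam (4 / 2 ^ (k + 1))

lemma dyadicYoungTerm_nonneg {ρ lam : ℝ → ℝ} (hρ0 : ∀ u ≥ (0 : ℝ), 0 ≤ ρ u)
    (hlam0 : ∀ u ≥ (0 : ℝ), 0 ≤ lam u) {V : ℝ} (hV : 0 ≤ V) (p : ℝ) (k : ℕ) :
    0 ≤ dyadicYoungTerm ρ lam V p k :=
  mul_nonneg (mul_nonneg (by positivity) (hρ0 _ (by positivity))) (hlam0 _ (by positivity))

lemma abs_double_diff_dyadic_le {a b c d p q : ℝ} {F G : ℝ → ℝ → ℝ} {lam mu ρ σ : ℝ → ℝ}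
    (hp : 1 ≤ p) (hq : 1 ≤ q) (hF₁ : FiniteBiVar1 p a b c d F) (hF₂ : FiniteBiVar2 q a b c d F)
    (hlam : MonotoneOn lam (Ici 0)) (hmu : MonotoneOn mu (Ici 0))
    (hlam0 : ∀ u ≥ (0 : ℝ), 0 ≤ lam u) (hmu0 : ∀ u ≥ (0 : ℝ), 0 ≤ mu u)
    (hρ : MonotoneOn ρ (Ici 0)) (hσ : MonotoneOn σ (Ici 0))
    (hρ0 : ∀ u ≥ (0 : ℝ), 0 ≤ ρ u) (hσ0 : ∀ u ≥ (0 : ℝ), 0 ≤ σ u)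
    (hρσ : ∀ u ≥ (0 : ℝ), ρ u * σ u = u)
    (hG : ∀ x₁ x₂ y₁ y₂ : ℝ, a ≤ x₁ → x₁ ≤ x₂ → x₂ ≤ b → c ≤ y₁ → y₁ ≤ y₂ → y₂ ≤ d →
      |rect G x₁ x₂ y₁ y₂| ≤ lam (x₂ - x₁) * mu (y₂ - y₁))
    {t s S : ℕ → ℕ → ℝ}
    (hS : ∀ n n', S n n' = stieltjesSum F G (t n) (s n') (2 ^ n) (2 ^ n')) (k k' : ℕ)
    (ht : (∀ i j : ℕ, i ≤ j → j ≤ 2 ^ (k + 1) → t (k + 1) i ≤ t (k + 1) j) ∧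
      t (k + 1) 0 = a ∧ t (k + 1) (2 ^ (k + 1)) = b)
    (htmesh : ∀ i < 2 ^ (k + 1), t (k + 1) (i + 1) - t (k + 1) i < 4 / 2 ^ (k + 1))
    (htnest : ∀ i ≤ 2 ^ k, t (k + 1) (2 * i) = t k i)
    (hs : (∀ i j : ℕ, i ≤ j → j ≤ 2 ^ (k' + 1) → s (k' + 1) i ≤ s (k' + 1) j) ∧
      s (k' + 1) 0 = c ∧ s (k' + 1) (2 ^ (k' + 1)) = d)
    (hsmesh : ∀ j < 2 ^ (k' + 1), s (k' + 1) (j + 1) - s (k' + 1) j < 4 / 2 ^ (k' + 1))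
    (hsnest : ∀ j ≤ 2 ^ k', s (k' + 1) (2 * j) = s k' j) :
    |S (k + 1) (k' + 1) - S k (k' + 1) - S (k + 1) k' + S k k'| ≤
      dyadicYoungTerm ρ lam (biVar1 p a b c d F) p k *
        dyadicYoungTerm σ mu (biVar2 q a b c d F) q k' := by
  obtain ⟨htmono, ht0, htN⟩ := ht
  obtain ⟨hsmono, hs0, hsN⟩ := hs
  have h2k : 2 ^ (k + 1) = 2 * 2 ^ k := pow_succ' 2 k
  have h2k' : 2 ^ (k' + 1) = 2 * 2 ^ k' := pow_succ' 2 k'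
  rw [h2k] at htmono htN htmesh
  rw [h2k'] at hsmono hsN hsmesh
  have htk := fun i hi => (htnest i hi).symm
  have hsk' := fun j hj => (hsnest j hj).symm
  rw [hS, hS, hS, hS, h2k, h2k', stieltjesSum_congr F G htk hsk',
    stieltjesSum_congr F G htk (fun _ (_ : _ ≤ 2 * 2 ^ k') => rfl),
    stieltjesSum_congr F G (fun _ (_ : _ ≤ 2 * 2 ^ k) => rfl) hsk', stieltjesSum_refine]
  have h := abs_sum_rect_mul_rect_le hp hq hF₁ hF₂ hlam hmu hlam0 hmu0 hρ hσ hρ0 hσ0 hρσ hG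
    (fun i _ j hj hij => htmono i j hij hj) ht0 htN
    (fun i _ j hj hij => hsmono i j hij hj) hs0 hsN
    (by positivity) (by positivity) (fun i hi => (htmesh i hi).le) (fun j hj => (hsmesh j hj).le)
  simpa only [dyadicYoungTerm, Nat.cast_pow, Nat.cast_ofNat] using h

lemma sum_dyadicYoungTerm_le_two_mul_tsum {ρ lam : ℝ → ℝ} (hρ : MonotoneOn ρ (Ici 0))
    (hlam : MonotoneOn lam (Ici 0)) (hρ0 : ∀ u ≥ (0 : ℝ), 0 ≤ ρ u)
    (hlam0 : ∀ u ≥ (0 : ℝ), 0 ≤ lam u) {V p : ℝ} (hV : 0 ≤ V) (hp : 0 ≤ p)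
    (hsum : Summable fun m : ℕ => ρ (V / ((m : ℝ) + 1) ^ (1 / p)) * lam (4 / ((m : ℝ) + 1)))
    (M : ℕ) :
    ∑ k ∈ range M, dyadicYoungTerm ρ lam V p k ≤
      2 * ∑' m : ℕ, ρ (V / ((m : ℝ) + 1) ^ (1 / p)) * lam (4 / ((m : ℝ) + 1)) := by
  set f : ℕ → ℝ := fun m => ρ (V / ((m : ℝ) + 1) ^ (1 / p)) * lam (4 / ((m : ℝ) + 1))
  have hf0 : 0 ≤ f := fun m => mul_nonneg (hρ0 _ (by positivity)) (hlam0 _ (by positivity))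
  have hf : Antitone f := by
    intro m n hmn
    have hmn' : (m : ℝ) + 1 ≤ n + 1 := by gcongr
    refine mul_le_mul (hρ (mem_Ici.2 (by positivity)) (mem_Ici.2 (by positivity)) ?_)
      (hlam (mem_Ici.2 (by positivity)) (mem_Ici.2 (by positivity))
      (div_le_div_of_nonneg_left (by norm_num) (by positivity) hmn')) (hlam0 _ (by positivity))
      (hρ0 _ (by positivity))
    exact div_le_div_of_nonneg_left hV (by positivity) (by gcongr)
  refine le_trans (sum_le_sum fun k _ => ?_) (sum_range_two_pow_mul_le_two_mul_tsum hf hf0 hsum M)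
  have hcast : ((2 ^ k - 1 : ℕ) : ℝ) + 1 = 2 ^ k := by
    rw [Nat.cast_sub Nat.one_le_two_pow]
    push_cast
    ring
  simp only [dyadicYoungTerm, f, hcast, mul_assoc]
  refine mul_le_mul_of_nonneg_left (mul_le_mul_of_nonneg_left ?_ (hρ0 _ (by positivity)))
    (by positivity)
  exact hlam (mem_Ici.2 (by positivity)) (mem_Ici.2 (by positivity))
    (div_le_div_of_nonneg_left (by norm_num) (by positivity)
      (pow_le_pow_right₀ one_le_two k.le_succ))

theorem young_dyadic_estimate_general
    (a b c d p q : ℝ) (hp : 1 ≤ p) (hq : 1 ≤ q)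
    (F G : ℝ → ℝ → ℝ)
    (lam mu ρ σ : ℝ → ℝ)
    (hlam : MonotoneOn lam (Set.Ici 0)) (hmu : MonotoneOn mu (Set.Ici 0))
    (hlam0 : ∀ u ≥ (0 : ℝ), 0 ≤ lam u) (hmu0 : ∀ u ≥ (0 : ℝ), 0 ≤ mu u)
    (hρ : MonotoneOn ρ (Set.Ici 0)) (hσ : MonotoneOn σ (Set.Ici 0))
    (hρ0 : ∀ u ≥ (0 : ℝ), 0 ≤ ρ u) (hσ0 : ∀ u ≥ (0 : ℝ), 0 ≤ σ u)
    (hρσ : ∀ u ≥ (0 : ℝ), ρ u * σ u = u)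
    (hF1 : FiniteBiVar1 p a b c d F) (hF2 : FiniteBiVar2 q a b c d F)
    (hG : ∀ x₁ x₂ y₁ y₂ : ℝ, a ≤ x₁ → x₁ ≤ x₂ → x₂ ≤ b → c ≤ y₁ → y₁ ≤ y₂ → y₂ ≤ d →
      |rect G x₁ x₂ y₁ y₂| ≤ lam (x₂ - x₁) * mu (y₂ - y₁))
    (M M' : ℕ) (t s : ℕ → ℕ → ℝ)
    (ht0 : ∀ k ≤ M, (∀ i j : ℕ, i ≤ j → j ≤ 2 ^ k → t k i ≤ t k j) ∧
      t k 0 = a ∧ t k (2 ^ k) = b)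
    (htmesh : ∀ k ≤ M, ∀ i < 2 ^ k, t k (i + 1) - t k i < 4 / 2 ^ k)
    (htnest : ∀ k, 1 ≤ k → k ≤ M → ∀ i ≤ 2 ^ (k - 1), t k (2 * i) = t (k - 1) i)
    (hs0 : ∀ k' ≤ M', (∀ i j : ℕ, i ≤ j → j ≤ 2 ^ k' → s k' i ≤ s k' j) ∧
      s k' 0 = c ∧ s k' (2 ^ k') = d)
    (hsmesh : ∀ k' ≤ M', ∀ j < 2 ^ k', s k' (j + 1) - s k' j < 4 / 2 ^ k')
    (hsnest : ∀ k', 1 ≤ k' → k' ≤ M' → ∀ j ≤ 2 ^ (k' - 1), s k' (2 * j) = s (k' - 1) j)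
    (hSum1 : Summable (fun m : ℕ =>
      ρ (biVar1 p a b c d F / ((m : ℝ) + 1) ^ (1 / p)) * lam (4 / ((m : ℝ) + 1))))
    (hSum2 : Summable (fun m' : ℕ =>
      σ (biVar2 q a b c d F / ((m' : ℝ) + 1) ^ (1 / q)) * mu (4 / ((m' : ℝ) + 1))))
    (S : ℕ → ℕ → ℝ)
    (hS : ∀ n n' : ℕ, S n n' =
      ∑ i ∈ Finset.range (2 ^ n), ∑ j ∈ Finset.range (2 ^ n'),
        F (t n (i + 1)) (s n' (j + 1)) *
          rect G (t n i) (t n (i + 1)) (s n' j) (s n' (j + 1))) :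
    |S M M' - S 0 M' - S M 0 + S 0 0| ≤
      16 * (∑' m : ℕ,
          ρ (biVar1 p a b c d F / ((m : ℝ) + 1) ^ (1 / p)) * lam (4 / ((m : ℝ) + 1)))
        * (∑' m' : ℕ,
          σ (biVar2 q a b c d F / ((m' : ℝ) + 1) ^ (1 / q)) * mu (4 / ((m' : ℝ) + 1))) := by
  have hV₁ := biVar1_nonneg p a b c d F
  have hV₂ := biVar2_nonneg_s9 q a b c d F
  have hlevel (k : ℕ) (hk : k < M) (k' : ℕ) (hk' : k' < M') :=
    abs_double_diff_dyadic_le hp hq hF1 hF2 hlam hmu hlam0 hmu0 hρ hσ hρ0 hσ0 hρσ hG hS k k'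
      (ht0 (k + 1) hk) (htmesh (k + 1) hk) (by simpa using htnest (k + 1) (by omega) hk)
      (hs0 (k' + 1) hk') (hsmesh (k' + 1) hk') (by simpa using hsnest (k' + 1) (by omega) hk')
  have hX := sum_dyadicYoungTerm_le_two_mul_tsum hρ hlam hρ0 hlam0 hV₁ (by linarith) hSum1 M
  have hY := sum_dyadicYoungTerm_le_two_mul_tsum hσ hmu hσ0 hmu0 hV₂ (by linarith) hSum2 M'
  have hX₀ := sum_nonneg fun k (_ : k ∈ range M) => dyadicYoungTerm_nonneg hρ0 hlam0 hV₁ p k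
  have hY₀ := sum_nonneg fun k' (_ : k' ∈ range M') => dyadicYoungTerm_nonneg hσ0 hmu0 hV₂ q k'
  rw [← sum_range_sum_range_rect]
  refine (abs_sum_le_sum_abs _ _).trans <| (sum_le_sum fun k hk =>
    (abs_sum_le_sum_abs _ _).trans <| sum_le_sum fun k' hk' =>
      hlevel k (Finset.mem_range.1 hk) k' (Finset.mem_range.1 hk')).trans ?_
  rw [← sum_mul_sum]
  nlinarith [mul_le_mul hX hY hY₀ (by linarith), mul_nonneg (hX₀.trans hX) (hY₀.trans hY)]

/-- the Young dyadic estimate.  `t k`/`s k'` are nested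
dyadically-refining partition sequences of `[a,b]`/`[c,d]` (level `k` has the
points `t k 0, …, t k (2^k)`, with `t k (2*i) = t (k-1) i` and mesh `< 4·2^{-k}`),
`F` has finite `(p,q)`-bivariation, `G` has rectangular increments controlled by
`λ(x₂-x₁)·μ(y₂-y₁)`, and `ρσ = id`.  Then the double difference of the dyadic
double Riemann–Stieltjes sums is bounded by `16` times the product of the two
Young series. -/
theorem young_dyadic_estimate
    (a b c d p q : ℝ) (hab : a < b) (hcd : c < d) (hp : 1 ≤ p) (hq : 1 ≤ q)
    (F G : ℝ → ℝ → ℝ)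
    (lam mu ρ σ : ℝ → ℝ)
    (hlam : MonotoneOn lam (Set.Ici 0)) (hmu : MonotoneOn mu (Set.Ici 0))
    (hlam0 : ∀ u ≥ (0 : ℝ), 0 ≤ lam u) (hmu0 : ∀ u ≥ (0 : ℝ), 0 ≤ mu u)
    (hρ : MonotoneOn ρ (Set.Ici 0)) (hσ : MonotoneOn σ (Set.Ici 0))
    (hρ0 : ∀ u ≥ (0 : ℝ), 0 ≤ ρ u) (hσ0 : ∀ u ≥ (0 : ℝ), 0 ≤ σ u)
    (hρσ : ∀ u ≥ (0 : ℝ), ρ u * σ u = u)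
    (hF1 : FiniteBiVar1 p a b c d F) (hF2 : FiniteBiVar2 q a b c d F)
    (hG : ∀ x₁ x₂ y₁ y₂ : ℝ, a ≤ x₁ → x₁ ≤ x₂ → x₂ ≤ b → c ≤ y₁ → y₁ ≤ y₂ → y₂ ≤ d →
      |rect G x₁ x₂ y₁ y₂| ≤ lam (x₂ - x₁) * mu (y₂ - y₁))
    (M M' : ℕ) (t s : ℕ → ℕ → ℝ)
    (ht0 : ∀ k ≤ M, (∀ i j : ℕ, i ≤ j → j ≤ 2 ^ k → t k i ≤ t k j) ∧
      t k 0 = a ∧ t k (2 ^ k) = b)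
    (htmesh : ∀ k ≤ M, ∀ i < 2 ^ k, t k (i + 1) - t k i < 4 / 2 ^ k)
    (htnest : ∀ k, 1 ≤ k → k ≤ M → ∀ i ≤ 2 ^ (k - 1), t k (2 * i) = t (k - 1) i)
    (hs0 : ∀ k' ≤ M', (∀ i j : ℕ, i ≤ j → j ≤ 2 ^ k' → s k' i ≤ s k' j) ∧
      s k' 0 = c ∧ s k' (2 ^ k') = d)
    (hsmesh : ∀ k' ≤ M', ∀ j < 2 ^ k', s k' (j + 1) - s k' j < 4 / 2 ^ k')
    (hsnest : ∀ k', 1 ≤ k' → k' ≤ M' → ∀ j ≤ 2 ^ (k' - 1), s k' (2 * j) = s (k' - 1) j)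
    (hSum1 : Summable (fun m : ℕ =>
      ρ (biVar1 p a b c d F / ((m : ℝ) + 1) ^ (1 / p)) * lam (4 / ((m : ℝ) + 1))))
    (hSum2 : Summable (fun m' : ℕ =>
      σ (biVar2 q a b c d F / ((m' : ℝ) + 1) ^ (1 / q)) * mu (4 / ((m' : ℝ) + 1))))
    (S : ℕ → ℕ → ℝ)
    (hS : ∀ n n' : ℕ, S n n' =
      ∑ i ∈ Finset.range (2 ^ n), ∑ j ∈ Finset.range (2 ^ n'),
        F (t n (i + 1)) (s n' (j + 1)) *
          rect G (t n i) (t n (i + 1)) (s n' j) (s n' (j + 1))) :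
    |S M M' - S 0 M' - S M 0 + S 0 0| ≤
      16 * (∑' m : ℕ,
          ρ (biVar1 p a b c d F / ((m : ℝ) + 1) ^ (1 / p)) * lam (4 / ((m : ℝ) + 1)))
        * (∑' m' : ℕ,
          σ (biVar2 q a b c d F / ((m' : ℝ) + 1) ^ (1 / q)) * mu (4 / ((m' : ℝ) + 1))) :=
  young_dyadic_estimate_general a b c d p q hp hq F G lam mu ρ σ hlam hmu hlam0 hmu0 hρ hσ hρ0 hσ0
    hρσ hF1 hF2 hG M M' t s ht0 htmesh htnest hs0 hsmesh hsnest hSum1 hSum2 S hS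
end
end
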